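/- Suppose the sign vector (ε₁,…,εₙ) ∈ {1,−1}ⁿ of the real Cayley–Dickson algebra 𝔸ₙ contains at least one εᵢ = −1. Then the pure trace of 𝔸ₙ equals one: the sum over all nonempty α ⊆ {1,…,n} of e_α · e_α equals 1 (the algebra unit). -/

import Mathlib

noncomputable section

/-- The real Cayley–Dickson algebra carrier: `CD 0 = ℝ`, `CD (n+1) = CD n × CD n`. -/
def CD : ℕ → Type
  | 0 => ℝ
  | n + 1 => CD n × CD n

instance CD.instAddCommGroup : (n : ℕ) → AddCommGroup (CD n)
  | 0 => inferInstanceAs (AddCommGroup ℝ)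
  | n + 1 =>
    letI := CD.instAddCommGroup n
    inferInstanceAs (AddCommGroup (CD n × CD n))

instance CD.instModule : (n : ℕ) → Module ℝ (CD n)
  | 0 => inferInstanceAs (Module ℝ ℝ)
  | n + 1 =>
    letI := CD.instModule n
    inferInstanceAs (Module ℝ (CD n × CD n))

/-- The unit of the Cayley–Dickson algebra. -/
def CD.one : (n : ℕ) → CD n
  | 0 => (1 : ℝ)
  | n + 1 => (CD.one n, 0)

/-- Conjugation: `(a, b)* = (a*, -b)`, identity on `ℝ`. -/
def CD.conj : (n : ℕ) → CD n → CD n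
  | 0, a => a
  | n + 1, x => (CD.conj n x.1, -x.2)

/-- Cayley–Dickson multiplication with sign vector `ε`:
`(a,b)·(c,d) = (a·c − ε (n+1) • (d*·b), d·a + b·c*)`. -/
def CD.mul (ε : ℕ → ℝ) : (n : ℕ) → CD n → CD n → CD n
  | 0, a, c => (show ℝ from a) * (show ℝ from c)
  | n + 1, x, y =>
    (CD.mul ε n x.1 y.1 - ε (n + 1) • CD.mul ε n (CD.conj n y.2) x.2,
     CD.mul ε n y.2 x.1 + CD.mul ε n x.2 (CD.conj n y.1))

/-- The standard basis element `e α` of `CD n`, for `α ⊆ {1,…,n}`. -/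
def CD.basis : (n : ℕ) → Finset ℕ → CD n
  | 0, _ => (1 : ℝ)
  | n + 1, α =>
    if n + 1 ∈ α then ((0 : CD n), CD.basis n (α.erase (n + 1)))
    else (CD.basis n α, (0 : CD n))

/-- `α` indexes a pure basis element of `CD n`. -/
def CD.IsPure (n : ℕ) (α : Finset ℕ) : Prop :=
  α.Nonempty ∧ α ⊆ Finset.Icc 1 n

/-- The associator `[x,y,z] = (x·y)·z − x·(y·z)`. -/
def CD.assoc (ε : ℕ → ℝ) (n : ℕ) (x y z : CD n) : CD n :=
  CD.mul ε n (CD.mul ε n x y) z - CD.mul ε n x (CD.mul ε n y z)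

/-- A triad: indices of three pairwise distinct pure basis elements `b, c, d`
with `d ≠ ±(b·c)` (all signs `εᵢ = 1`). -/
def CD.IsTriad (n : ℕ) (α β γ : Finset ℕ) : Prop :=
  CD.IsPure n α ∧ CD.IsPure n β ∧ CD.IsPure n γ ∧
  α ≠ β ∧ α ≠ γ ∧ β ≠ γ ∧
  CD.basis n γ ≠ CD.mul (fun _ => 1) n (CD.basis n α) (CD.basis n β) ∧
  CD.basis n γ ≠ -CD.mul (fun _ => 1) n (CD.basis n α) (CD.basis n β)

/-- Multiplication with all signs `εᵢ = 1`. -/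
abbrev CD.mul1 (n : ℕ) : CD n → CD n → CD n := CD.mul (fun _ => 1) n

/-- Associator with all signs `εᵢ = 1`. -/
abbrev CD.assoc1 (n : ℕ) : CD n → CD n → CD n → CD n := CD.assoc (fun _ => 1) n

/-!
Induction on `n` shows `e_α* · e_α = (∏ i ∈ α, εᵢ) · 1`, and `e_α* = -e_α` for pure `α`, so
`e_α · e_α = -(∏ i ∈ α, εᵢ) · 1`. Summing over the nonempty `α ⊆ {1,…,n}` gives
`1 - ∏ i, (1 + εᵢ)`, and the product vanishes as soon as one `εᵢ = -1`.
-/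

namespace CD

variable {n : ℕ} (ε : ℕ → ℝ)

lemma ext_succ {x y : CD (n + 1)} (h₁ : x.1 = y.1) (h₂ : x.2 = y.2) : x = y := Prod.ext h₁ h₂

@[simp] lemma fst_zero : (0 : CD (n + 1)).1 = 0 := rfl
@[simp] lemma snd_zero : (0 : CD (n + 1)).2 = 0 := rfl
@[simp] lemma fst_neg (x : CD (n + 1)) : (-x).1 = -x.1 := rfl
@[simp] lemma snd_neg (x : CD (n + 1)) : (-x).2 = -x.2 := rfl
@[simp] lemma fst_smul (r : ℝ) (x : CD (n + 1)) : (r • x).1 = r • x.1 := rfl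
@[simp] lemma snd_smul (r : ℝ) (x : CD (n + 1)) : (r • x).2 = r • x.2 := rfl
@[simp] lemma fst_one : (one (n + 1)).1 = one n := rfl
@[simp] lemma snd_one : (one (n + 1)).2 = 0 := rfl
@[simp] lemma fst_conj (x : CD (n + 1)) : (conj (n + 1) x).1 = conj n x.1 := rfl
@[simp] lemma snd_conj (x : CD (n + 1)) : (conj (n + 1) x).2 = -x.2 := rfl

@[simp] lemma fst_mul (x y : CD (n + 1)) :
    (mul ε (n + 1) x y).1 = mul ε n x.1 y.1 - ε (n + 1) • mul ε n (conj n y.2) x.2 := rfl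
@[simp] lemma snd_mul (x y : CD (n + 1)) :
    (mul ε (n + 1) x y).2 = mul ε n y.2 x.1 + mul ε n x.2 (conj n y.1) := rfl

def mk (a b : CD n) : CD (n + 1) := (a, b)

@[simp] lemma fst_mk (a b : CD n) : (mk a b).1 = a := rfl
@[simp] lemma snd_mk (a b : CD n) : (mk a b).2 = b := rfl

lemma basis_succ_of_mem {α : Finset ℕ} (h : n + 1 ∈ α) :
    basis (n + 1) α = mk 0 (basis n (α.erase (n + 1))) := if_pos h

lemma basis_succ_of_notMem {α : Finset ℕ} (h : n + 1 ∉ α) :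
    basis (n + 1) α = mk (basis n α) 0 := if_neg h

@[simp] lemma conj_zero : ∀ n, conj n (0 : CD n) = 0
  | 0 => rfl
  | n + 1 => ext_succ (by simp [conj_zero n]) (by simp)

lemma conj_smul (r : ℝ) : ∀ n (x : CD n), conj n (r • x) = r • conj n x
  | 0, _ => rfl
  | n + 1, x => ext_succ (by simp [conj_smul r n]) (by simp)

lemma smul_mul_and_mul_smul : ∀ n, (∀ (r : ℝ) (x y : CD n), mul ε n (r • x) y = r • mul ε n x y) ∧
    ∀ (r : ℝ) (x y : CD n), mul ε n x (r • y) = r • mul ε n x y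
  | 0 => ⟨fun r x y => smul_mul_assoc r (show ℝ from x) (show ℝ from y),
      fun r x y => mul_smul_comm r (show ℝ from x) (show ℝ from y)⟩
  | n + 1 =>
    have ⟨smul_mul, mul_smul⟩ := smul_mul_and_mul_smul n
    ⟨fun r x y => ext_succ
      (by simp [smul_mul, mul_smul, smul_sub, smul_comm r])
      (by simp [smul_mul, mul_smul, smul_add]),
    fun r x y => ext_succ
      (by simp [conj_smul, smul_mul, mul_smul, smul_sub, smul_comm r])
      (by simp [conj_smul, smul_mul, mul_smul, smul_add])⟩

lemma smul_mul (r : ℝ) (x y : CD n) : mul ε n (r • x) y = r • mul ε n x y :=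
  (smul_mul_and_mul_smul ε n).1 r x y

lemma mul_smul (r : ℝ) (x y : CD n) : mul ε n x (r • y) = r • mul ε n x y :=
  (smul_mul_and_mul_smul ε n).2 r x y

@[simp] lemma mul_zero (x : CD n) : mul ε n x 0 = 0 := by
  simpa using mul_smul ε 0 x 0

@[simp] lemma zero_mul (x : CD n) : mul ε n 0 x = 0 := by
  simpa using smul_mul ε 0 0 x

lemma neg_mul (x y : CD n) : mul ε n (-x) y = -mul ε n x y := by
  rw [← neg_one_smul ℝ x, smul_mul, neg_one_smul]

lemma mul_neg (x y : CD n) : mul ε n x (-y) = -mul ε n x y := by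
  rw [← neg_one_smul ℝ y, mul_smul, neg_one_smul]

lemma erase_succ_subset_Icc {α : Finset ℕ} (h : α ⊆ Finset.Icc 1 (n + 1)) :
    α.erase (n + 1) ⊆ Finset.Icc 1 n := by
  intro i hi
  have := h (Finset.mem_of_mem_erase hi)
  simp only [Finset.mem_Icc] at this ⊢
  have := Finset.ne_of_mem_erase hi
  omega

lemma conj_basis : ∀ {n : ℕ} {α : Finset ℕ}, IsPure n α → conj n (basis n α) = -basis n α
  | 0, _, ⟨⟨_, hi⟩, hα⟩ => by simpa using hα hi
  | n + 1, α, ⟨hne, hα⟩ => by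
    by_cases h : n + 1 ∈ α
    · rw [basis_succ_of_mem h]
      exact ext_succ (by simp) (by simp)
    · have hα' : α ⊆ Finset.Icc 1 n := Finset.erase_eq_of_notMem h ▸ erase_succ_subset_Icc hα
      rw [basis_succ_of_notMem h]
      exact ext_succ (by simp [conj_basis ⟨hne, hα'⟩]) (by simp)

lemma conj_basis_mul_basis :
    ∀ {n : ℕ} {α : Finset ℕ}, α ⊆ Finset.Icc 1 n →
      mul ε n (conj n (basis n α)) (basis n α) = (∏ i ∈ α, ε i) • one n
  | 0, α, hα => by
    rw [Finset.subset_empty.1 hα, Finset.prod_empty, one_smul]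
    exact _root_.mul_one (1 : ℝ)
  | n + 1, α, hα => by
    have ih := conj_basis_mul_basis (erase_succ_subset_Icc hα)
    by_cases h : n + 1 ∈ α
    · rw [basis_succ_of_mem h, ← Finset.mul_prod_erase α ε h]
      exact ext_succ (by simp [mul_neg, ih, smul_smul]) (by simp)
    · rw [Finset.erase_eq_of_notMem h] at ih
      rw [basis_succ_of_notMem h]
      exact ext_succ (by simp [ih]) (by simp)

lemma basis_mul_self {α : Finset ℕ} (h : IsPure n α) :
    mul ε n (basis n α) (basis n α) = (-∏ i ∈ α, ε i) • one n := by
  have := conj_basis_mul_basis ε h.2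
  rw [conj_basis h, neg_mul] at this
  rw [neg_smul, ← this, neg_neg]

end CD

theorem Finset.prod_one_add_sub_one {ι R : Type*} [CommRing R] (s : Finset ι) (f : ι → R) :
    ∏ i ∈ s, (1 + f i) - 1 = ∑ t ∈ s.powerset.filter (fun t => t.Nonempty), ∏ i ∈ t, f i := by
  classical
  have : s.powerset.filter (fun t => t.Nonempty) = s.powerset.erase ∅ := by
    simp only [nonempty_iff_ne_empty, filter_ne']
  rw [this, sum_erase_eq_sub (empty_mem_powerset s), prod_one_add, prod_empty]

theorem stmt17_general (n : ℕ) (ε : ℕ → ℝ)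
    (hneg : ∃ i ∈ Finset.Icc 1 n, ε i = -1) :
    ∑ α ∈ (Finset.Icc 1 n).powerset.filter (fun α => α.Nonempty),
        CD.mul ε n (CD.basis n α) (CD.basis n α) = CD.one n := by
  obtain ⟨i, hi, hεi⟩ := hneg
  calc ∑ α ∈ (Finset.Icc 1 n).powerset.filter (fun α => α.Nonempty),
        CD.mul ε n (CD.basis n α) (CD.basis n α)
      = ∑ α ∈ (Finset.Icc 1 n).powerset.filter (fun α => α.Nonempty),
          (-∏ j ∈ α, ε j) • CD.one n :=
        Finset.sum_congr rfl fun α hα =>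
          CD.basis_mul_self ε ⟨(Finset.mem_filter.1 hα).2,
            Finset.mem_powerset.1 (Finset.mem_filter.1 hα).1⟩
    _ = (1 - ∏ j ∈ Finset.Icc 1 n, (1 + ε j)) • CD.one n := by
        rw [← Finset.sum_smul, Finset.sum_neg_distrib, ← Finset.prod_one_add_sub_one, neg_sub]
    _ = CD.one n := by
        rw [Finset.prod_eq_zero hi (by rw [hεi]; norm_num), sub_zero, one_smul]

/-- (Trace theorem.) If some `εᵢ = −1`, the sum of the squares
of the `2ⁿ − 1` pure basis elements of `𝔸ₙ` equals `1`. -/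
theorem stmt17 (n : ℕ) (ε : ℕ → ℝ)
    (hε : ∀ i ∈ Finset.Icc 1 n, ε i = 1 ∨ ε i = -1)
    (hneg : ∃ i ∈ Finset.Icc 1 n, ε i = -1) :
    ∑ α ∈ (Finset.Icc 1 n).powerset.filter (fun α => α.Nonempty),
        CD.mul ε n (CD.basis n α) (CD.basis n α) = CD.one n :=
  stmt17_general n ε hneg
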